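/- arXiv:2603.11069 — 5 statements merged into one kernel-verified Lean document; each statement's English description precedes it below -/
import Mathlib

section
/- (MacMahon's identity) For every positive integer n and all commuting indeterminates (or real numbers) x and y, ∑_{k=0}^{n} C(n,k)^3 · x^k · y^{n−k} = ∑_{k=0}^{⌊n/2⌋} C(n,2k) · C(2k,k) · C(n+k,k) · x^k · y^k · (x+y)^{n−2k}. -/
open Finset

-- trinomial revision, unconditional given i ≤ k
lemma tri (n k i : ℕ) (h : i ≤ k) :
    n.choose k * k.choose i = n.choose i * (n - i).choose (k - i) := by
  rcases le_or_gt k n with hkn | hkn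
  · exact Nat.choose_mul h
  · rw [Nat.choose_eq_zero_of_lt hkn, zero_mul]
    rcases le_or_gt i n with hin | hin
    · rw [Nat.choose_eq_zero_of_lt (show n - i < k - i by omega), mul_zero]
    · rw [Nat.choose_eq_zero_of_lt hin, zero_mul]

lemma E (n b c : ℕ) :
    n.choose b * (n - b).choose c = n.choose (b + c) * (b + c).choose b := by
  have := tri n (b + c) b (Nat.le_add_right _ _)
  rw [Nat.add_sub_cancel_left] at this
  exact this.symm

lemma V (a b c : ℕ) :
    (a + b).choose c = ∑ i ∈ range (c + 1), a.choose i * b.choose (c - i) := by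
  rw [Nat.add_choose_eq, Finset.Nat.sum_antidiagonal_eq_sum_range_succ_mk]

lemma lemF (n j : ℕ) (hj : j ≤ n) :
    ∑ i ∈ range (j + 1), j.choose i * (n - j).choose i = n.choose j := by
  have h := V (n - j) j j
  rw [Nat.sub_add_cancel hj] at h
  rw [h]
  refine Finset.sum_congr rfl fun i hi => ?_
  rw [Finset.mem_range] at hi
  rw [Nat.choose_symm (by omega), mul_comm]

lemma lemB (n k : ℕ) :
    (n + k).choose k = ∑ i ∈ range (k + 1), n.choose i * k.choose i := by
  rw [V n k k]
  refine Finset.sum_congr rfl fun i hi => ?_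
  rw [Finset.mem_range] at hi
  rw [Nat.choose_symm (by omega)]

lemma lemC (n i j : ℕ) (hi : i ≤ j) (hj : j ≤ n) :
    ∑ m ∈ range (j - i + 1), (j - i).choose m * (n - j).choose (i + m)
      = (n - i).choose j := by
  have h : (n - i) = (j - i) + (n - j) := by omega
  rw [h, V]
  rw [← Finset.sum_subset (Finset.range_subset_range.2 (show j - i + 1 ≤ j + 1 by omega))
    (fun a _ ha => by
      rw [Finset.mem_range, not_lt] at ha
      rw [Nat.choose_eq_zero_of_lt (show j - i < a by omega), zero_mul])]
  rw [← Finset.sum_range_reflect]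
  refine Finset.sum_congr rfl fun m hm => ?_
  rw [Finset.mem_range] at hm
  rw [show j - i + 1 - 1 - m = j - i - m from by omega,
    show i + (j - i - m) = j - m from by omega,
    Nat.choose_symm (show m ≤ j - i from by omega)]

lemma lemInner (n i j : ℕ) (hi : i ≤ j) (hj : j ≤ n) :
    ∑ k ∈ range (j + 1), j.choose k * k.choose i * (n - j).choose k
      = j.choose i * (n - i).choose j := by
  have hsub : Finset.Ico i (j + 1) ⊆ Finset.range (j + 1) := by
    rw [Finset.range_eq_Ico]
    exact Finset.Ico_subset_Ico (Nat.zero_le _) le_rfl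
  rw [← Finset.sum_subset hsub (fun k hk hk2 => by
    have : k < i := by
      rw [Finset.mem_range] at hk
      rw [Finset.mem_Ico, not_and_or, not_le] at hk2
      omega
    rw [Nat.choose_eq_zero_of_lt this, mul_zero, zero_mul])]
  rw [Finset.sum_Ico_eq_sum_range]
  have hr : j + 1 - i = j - i + 1 := by omega
  rw [hr, ← lemC n i j hi hj, Finset.mul_sum]
  refine Finset.sum_congr rfl fun m hm => ?_
  have h1 := tri j (i + m) i (Nat.le_add_right _ _)
  rw [Nat.add_sub_cancel_left] at h1
  rw [h1, mul_assoc]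

lemma lemS2 (n j : ℕ) (hj : j ≤ n) :
    ∑ k ∈ range (j + 1), j.choose k * (n - j).choose k * (n + k).choose k
      = n.choose j ^ 2 := by
  have step1 : ∀ k ∈ range (j + 1),
      j.choose k * (n - j).choose k * (n + k).choose k
        = ∑ i ∈ range (j + 1), j.choose k * k.choose i * (n - j).choose k * n.choose i := by
    intro k hk
    rw [Finset.mem_range] at hk
    rw [lemB n k, Finset.mul_sum]
    rw [← Finset.sum_subset (Finset.range_subset_range.2 (show k + 1 ≤ j + 1 by omega))
      (fun i _ hi => by
        rw [Finset.mem_range, not_lt] at hi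
        rw [Nat.choose_eq_zero_of_lt (show k < i by omega)]
        ring)]
    refine Finset.sum_congr rfl fun i _ => ?_
    ring
  rw [Finset.sum_congr rfl step1, Finset.sum_comm]
  have step2 : ∀ i ∈ range (j + 1),
      ∑ k ∈ range (j + 1), j.choose k * k.choose i * (n - j).choose k * n.choose i
        = n.choose j * (j.choose i * (n - j).choose i) := by
    intro i hi
    rw [Finset.mem_range] at hi
    rw [← Finset.sum_mul, lemInner n i j (by omega) hj]
    -- now : j.choose i * (n - i).choose j * n.choose i = ...
    have hD : n.choose i * (n - i).choose j = n.choose j * (n - j).choose i := by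
      rw [E n i j, E n j i, Nat.add_comm j i, Nat.choose_symm_add]
    calc j.choose i * (n - i).choose j * n.choose i
        = j.choose i * (n.choose i * (n - i).choose j) := by ring
      _ = j.choose i * (n.choose j * (n - j).choose i) := by rw [hD]
      _ = n.choose j * (j.choose i * (n - j).choose i) := by ring
  rw [Finset.sum_congr rfl step2, ← Finset.mul_sum, lemF n j hj, sq]

lemma lemA (n j k : ℕ) (hk : k ≤ j) :
    n.choose (2 * k) * (2 * k).choose k * (n - 2 * k).choose (j - k)
      = n.choose j * (j.choose k * (n - j).choose k) := by
  have h1 : n.choose (2 * k) * (n - 2 * k).choose (j - k)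
      = n.choose (k + j) * (k + j).choose (2 * k) := by
    have := E n (2 * k) (j - k)
    rw [show 2 * k + (j - k) = k + j from by omega] at this
    exact this
  have h2 : (k + j).choose (2 * k) * (2 * k).choose k
      = (k + j).choose k * j.choose k := by
    have := tri (k + j) (2 * k) k (by omega)
    rw [Nat.add_sub_cancel_left, show 2 * k - k = k from by omega] at this
    exact this
  have h3 : n.choose j * (n - j).choose k = n.choose (j + k) * (j + k).choose j := E n j k
  calc n.choose (2 * k) * (2 * k).choose k * (n - 2 * k).choose (j - k)
      = n.choose (2 * k) * (n - 2 * k).choose (j - k) * (2 * k).choose k := by ring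
    _ = n.choose (k + j) * ((k + j).choose (2 * k) * (2 * k).choose k) := by rw [h1]; ring
    _ = n.choose (k + j) * ((k + j).choose k * j.choose k) := by rw [h2]
    _ = n.choose (j + k) * (j + k).choose j * j.choose k := by
        rw [Nat.add_comm k j, Nat.choose_symm_add]; ring
    _ = n.choose j * (n - j).choose k * j.choose k := by rw [← h3]
    _ = _ := by ring

lemma lemL1 (n j : ℕ) (hj : j ≤ n) :
    ∑ k ∈ range (j + 1),
        n.choose (2 * k) * (2 * k).choose k * (n + k).choose k * (n - 2 * k).choose (j - k)
      = n.choose j ^ 3 := by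
  have : ∀ k ∈ range (j + 1),
      n.choose (2 * k) * (2 * k).choose k * (n + k).choose k * (n - 2 * k).choose (j - k)
        = n.choose j * (j.choose k * (n - j).choose k * (n + k).choose k) := by
    intro k hk
    rw [Finset.mem_range] at hk
    calc n.choose (2 * k) * (2 * k).choose k * (n + k).choose k * (n - 2 * k).choose (j - k)
        = n.choose (2 * k) * (2 * k).choose k * (n - 2 * k).choose (j - k) * (n + k).choose k := by
          ring
      _ = n.choose j * (j.choose k * (n - j).choose k) * (n + k).choose k := by
          rw [lemA n j k (by omega)]
      _ = _ := by ring
  rw [Finset.sum_congr rfl this, ← Finset.mul_sum, lemS2 n j hj]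
  ring

lemma perk (n k : ℕ) (x y : ℝ) (h2 : 2 * k ≤ n) :
    x ^ k * y ^ k * (x + y) ^ (n - 2 * k)
      = ∑ j ∈ Finset.Ico k (n + 1), ((n - 2 * k).choose (j - k) : ℝ) * x ^ j * y ^ (n - j) := by
  rw [Finset.sum_Ico_eq_sum_range]
  rw [← Finset.sum_subset (Finset.range_subset_range.2 (show n - 2 * k + 1 ≤ n + 1 - k by omega))
    (fun m _ hm => by
      rw [Finset.mem_range, not_lt] at hm
      rw [Nat.choose_eq_zero_of_lt (show n - 2 * k < k + m - k by omega)]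
      push_cast; ring)]
  rw [add_pow, Finset.mul_sum]
  refine Finset.sum_congr rfl fun m hm => ?_
  rw [Finset.mem_range] at hm
  rw [show k + m - k = m from by omega,
    show n - (k + m) = k + (n - 2 * k - m) from by omega, pow_add, pow_add]
  push_cast
  ring

theorem stmt_3 (n : ℕ) (hn : 0 < n) (x y : ℝ) :
    ∑ k ∈ Finset.range (n + 1), (n.choose k : ℝ) ^ 3 * x ^ k * y ^ (n - k) =
      ∑ k ∈ Finset.range (n / 2 + 1),
        (n.choose (2 * k) : ℝ) * ((2 * k).choose k : ℝ) * ((n + k).choose k : ℝ) *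
          x ^ k * y ^ k * (x + y) ^ (n - 2 * k) := by
  symm
  rw [Finset.sum_subset (Finset.range_subset_range.2 (show n / 2 + 1 ≤ n + 1 by omega))
    (fun k hk hk2 => by
      rw [Finset.mem_range] at hk
      rw [Finset.mem_range, not_lt] at hk2
      rw [Nat.choose_eq_zero_of_lt (show n < 2 * k by omega)]
      push_cast; ring)]
  have h2 : ∑ k ∈ Finset.range (n + 1),
      (n.choose (2 * k) : ℝ) * ((2 * k).choose k : ℝ) * ((n + k).choose k : ℝ) *
        x ^ k * y ^ k * (x + y) ^ (n - 2 * k)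
      = ∑ k ∈ Finset.range (n + 1), ∑ j ∈ Finset.Ico k (n + 1),
          ((n.choose (2 * k) * ((2 * k).choose k) * ((n + k).choose k) *
            (n - 2 * k).choose (j - k) : ℕ) : ℝ) * x ^ j * y ^ (n - j) := by
    refine Finset.sum_congr rfl fun k hk => ?_
    rw [Finset.mem_range] at hk
    by_cases h2k : 2 * k ≤ n
    · rw [show (n.choose (2 * k) : ℝ) * ((2 * k).choose k : ℝ) * ((n + k).choose k : ℝ) *
          x ^ k * y ^ k * (x + y) ^ (n - 2 * k)
          = ((n.choose (2 * k) : ℝ) * ((2 * k).choose k : ℝ) * ((n + k).choose k : ℝ)) *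
            (x ^ k * y ^ k * (x + y) ^ (n - 2 * k)) from by ring,
        perk n k x y h2k, Finset.mul_sum]
      refine Finset.sum_congr rfl fun j hj => ?_
      push_cast; ring
    · rw [Nat.choose_eq_zero_of_lt (show n < 2 * k by omega)]
      simp
  rw [h2, Finset.sum_comm' (t' := Finset.range (n + 1)) (s' := fun j => Finset.range (j + 1))
    (fun k j => by
      simp only [Finset.mem_range, Finset.mem_Ico]
      omega)]
  refine Finset.sum_congr rfl fun j hj => ?_
  rw [Finset.mem_range] at hj
  rw [← Finset.sum_mul, ← Finset.sum_mul, ← Nat.cast_sum, lemL1 n j (by omega)]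
  push_cast; ring
end

section
/- For every positive integer n, ∑_{r=0}^{n} C(n,r)^3 · 2^r = ∑_{r=0}^{⌊n/2⌋} C(n,2r) · C(2r,r) · C(n+r,r) · 2^r · 3^{n−2r}. -/
open Finset

/-- Vandermonde in range form. -/
lemma vand_aux (a c n : ℕ) :
    ∑ p ∈ range (n + 1), a.choose p * c.choose (n - p) = (a + c).choose n := by
  rw [Nat.add_choose_eq, Finset.Nat.sum_antidiagonal_eq_sum_range_succ_mk]

lemma sum_choose_choose (a b : ℕ) :
    ∑ i ∈ range (a + b + 1), a.choose i * b.choose i = (a + b).choose b := by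
  have h1 : ∑ i ∈ range (b + 1), a.choose i * b.choose i
      = ∑ i ∈ range (a + b + 1), a.choose i * b.choose i := by
    apply Finset.sum_subset
    · exact Finset.range_subset_range.2 (by omega)
    · intro i _ hi
      rw [mem_range] at hi
      rw [Nat.choose_eq_zero_of_lt (by omega : b < i), mul_zero]
  rw [← h1, ← vand_aux a b b]
  apply Finset.sum_congr rfl
  intro i hi
  rw [mem_range, Nat.lt_succ_iff] at hi
  rw [Nat.choose_symm hi]

lemma inner_vand (a b i : ℕ) :
    ∑ k ∈ range (b + 1), a.choose k * (b.choose k * k.choose i)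
      = b.choose i * (a + b - i).choose b := by
  by_cases hib : i ≤ b
  · have key : ∀ k ∈ range (b + 1),
        a.choose k * (b.choose k * k.choose i)
          = b.choose i * (a.choose k * (b - i).choose (b - k)) := by
      intro k hk
      rw [mem_range, Nat.lt_succ_iff] at hk
      rcases le_or_gt i k with hik | hik
      · rw [Nat.choose_mul hik]
        have h2 : (b - i).choose (k - i) = (b - i).choose (b - k) := by
          rw [← Nat.choose_symm (by omega : k - i ≤ b - i)]
          congr 1
          omega
        rw [h2]; ring
      · rw [Nat.choose_eq_zero_of_lt hik,
          Nat.choose_eq_zero_of_lt (by omega : b - i < b - k)]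
        ring
    rw [Finset.sum_congr rfl key, ← Finset.mul_sum]
    congr 1
    have := vand_aux a (b - i) b
    rw [this]
    congr 1
    omega
  · rw [Nat.choose_eq_zero_of_lt (by omega : b < i), zero_mul]
    apply Finset.sum_eq_zero
    intro k hk
    rw [mem_range, Nat.lt_succ_iff] at hk
    rw [Nat.choose_eq_zero_of_lt (by omega : k < i)]
    ring

/-- Key identity: ∑ k, C(a,k) C(b,k) C(a+b+k,k) = C(a+b,b)^2. -/
lemma key_identity (a b : ℕ) :
    ∑ k ∈ range (b + 1), a.choose k * b.choose k * (a + b + k).choose k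
      = (a + b).choose b ^ 2 := by
  have step1 : ∑ k ∈ range (b + 1), a.choose k * b.choose k * (a + b + k).choose k
      = ∑ k ∈ range (b + 1), ∑ i ∈ range (a + b + 1),
          a.choose k * (b.choose k * k.choose i) * (a + b).choose (a + b - i) := by
    apply Finset.sum_congr rfl
    intro k _
    have h1 : (a + b + k).choose k = (k + (a + b)).choose (a + b) := by
      rw [Nat.add_comm k (a + b)]
      have h := Nat.choose_symm (Nat.le_add_right (a + b) k)
      simpa using h
    rw [h1, Nat.add_choose_eq, Finset.Nat.sum_antidiagonal_eq_sum_range_succ_mk,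
      Finset.mul_sum]
    apply Finset.sum_congr rfl
    intro i _
    ring
  rw [step1, Finset.sum_comm]
  have step2 : ∀ i ∈ range (a + b + 1),
      ∑ k ∈ range (b + 1),
          a.choose k * (b.choose k * k.choose i) * (a + b).choose (a + b - i)
        = (a + b).choose b * (a.choose i * b.choose i) := by
    intro i hi
    rw [mem_range, Nat.lt_succ_iff] at hi
    rw [← Finset.sum_mul, inner_vand a b i, Nat.choose_symm hi]
    rcases le_or_gt i a with hia | hia
    · have h3 : (a + b - i).choose b = (a + b - i).choose (a - i) := by
        rw [← Nat.choose_symm (by omega : a - i ≤ a + b - i)]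
        congr 1
        omega
      have h4 := Nat.choose_mul (n := a + b) hia
      have h5 : (a + b).choose a = (a + b).choose b := by
        rw [← Nat.choose_symm (by omega : b ≤ a + b)]
        congr 1
        omega
      rw [h3]
      calc b.choose i * (a + b - i).choose (a - i) * (a + b).choose i
          = b.choose i * ((a + b).choose i * (a + b - i).choose (a - i)) := by ring
        _ = b.choose i * ((a + b).choose a * a.choose i) := by rw [← h4]
        _ = (a + b).choose b * (a.choose i * b.choose i) := by rw [h5]; ring
    · rw [Nat.choose_eq_zero_of_lt hia,
        Nat.choose_eq_zero_of_lt (by omega : a + b - i < b)]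
      ring
  rw [Finset.sum_congr rfl step2, ← Finset.mul_sum, sum_choose_choose, sq]

/-- Trinomial rearrangement. -/
lemma tri_aux (n m k : ℕ) (hkm : k ≤ m) (hmn : m ≤ n) :
    n.choose m * (m.choose k * (n - m).choose k)
      = n.choose (2 * k) * (2 * k).choose k * (n - 2 * k).choose (m - k) := by
  have h1 : n.choose m * m.choose k = n.choose k * (n - k).choose (m - k) :=
    Nat.choose_mul (n := n) hkm
  have h2 : n.choose (2 * k) * (2 * k).choose k = n.choose k * (n - k).choose k := by
    rcases le_or_gt (2 * k) n with h | h
    · have := Nat.choose_mul (n := n) (by omega : k ≤ 2 * k)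
      rw [this]
      congr 2
      omega
    · rw [Nat.choose_eq_zero_of_lt h, Nat.choose_eq_zero_of_lt (by omega : n - k < k)]
      ring
  have h3 : (n - k).choose (m - k) * (n - m).choose k
      = (n - k).choose k * (n - 2 * k).choose (m - k) := by
    set N := n - k with hN
    have hnm : n - m = N - (m - k) := by omega
    have hn2k : n - 2 * k = N - k := by omega
    rw [hnm, hn2k]
    rcases le_or_gt (m - k + k) N with h | h
    · have ha := Nat.choose_mul (n := N) (by omega : m - k ≤ m - k + k)
      have hb := Nat.choose_mul (n := N) (by omega : k ≤ m - k + k)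
      have hc : (m - k + k).choose (m - k) = (m - k + k).choose k := by
        rw [← Nat.choose_symm (by omega : k ≤ m - k + k)]
        congr 1
        omega
      have hd : m - k + k - (m - k) = k := by omega
      have he : m - k + k - k = m - k := by omega
      rw [hd] at ha
      rw [he] at hb
      calc N.choose (m - k) * (N - (m - k)).choose k
          = N.choose (m - k + k) * (m - k + k).choose (m - k) := ha.symm
        _ = N.choose (m - k + k) * (m - k + k).choose k := by rw [hc]
        _ = N.choose k * (N - k).choose (m - k) := hb
    · rcases le_or_gt (m - k) N with hmk | hmk
      · rw [Nat.choose_eq_zero_of_lt (by omega : N - (m - k) < k)]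
        rcases le_or_gt k N with hkN | hkN
        · rw [Nat.choose_eq_zero_of_lt (by omega : N - k < m - k)]
          ring
        · rw [Nat.choose_eq_zero_of_lt (by omega : N < k)]
          ring
      · rw [Nat.choose_eq_zero_of_lt (by omega : N < m - k)]
        rcases le_or_gt k N with hkN | hkN
        · rw [Nat.choose_eq_zero_of_lt (by omega : N - k < m - k)]
          ring
        · rw [Nat.choose_eq_zero_of_lt (by omega : N < k)]
          ring
  calc n.choose m * (m.choose k * (n - m).choose k)
      = n.choose m * m.choose k * (n - m).choose k := by ring
    _ = n.choose k * ((n - k).choose (m - k) * (n - m).choose k) := by rw [h1]; ring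
    _ = n.choose k * ((n - k).choose k * (n - 2 * k).choose (m - k)) := by rw [h3]
    _ = n.choose k * (n - k).choose k * (n - 2 * k).choose (m - k) := by ring
    _ = n.choose (2 * k) * (2 * k).choose k * (n - 2 * k).choose (m - k) := by rw [h2]

lemma sum_two_pow (N M : ℕ) (hNM : N ≤ M) :
    ∑ j ∈ range (M + 1), N.choose j * 2 ^ j = 3 ^ N := by
  have h1 : ∑ j ∈ range (N + 1), N.choose j * 2 ^ j
      = ∑ j ∈ range (M + 1), N.choose j * 2 ^ j := by
    apply Finset.sum_subset (Finset.range_subset_range.2 (by omega))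
    intro j _ hj
    rw [mem_range] at hj
    rw [Nat.choose_eq_zero_of_lt (by omega : N < j), zero_mul]
  rw [← h1]
  have h2 : (3 : ℕ) = 2 + 1 := rfl
  rw [h2, add_pow]
  apply Finset.sum_congr rfl
  intro j _
  simp [mul_comm]

theorem stmt_4 (n : ℕ) (hn : 0 < n) :
    ∑ r ∈ Finset.range (n + 1), (n.choose r) ^ 3 * 2 ^ r =
      ∑ r ∈ Finset.range (n / 2 + 1),
        n.choose (2 * r) * (2 * r).choose r * (n + r).choose r * 2 ^ r * 3 ^ (n - 2 * r) := by
  have step1 : ∀ m ∈ range (n + 1),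
      (n.choose m) ^ 3 * 2 ^ m
        = ∑ k ∈ range (n + 1),
            2 ^ m * (n.choose m * (m.choose k * (n - m).choose k)) * (n + k).choose k := by
    intro m hm
    rw [mem_range, Nat.lt_succ_iff] at hm
    have hA := key_identity (n - m) m
    have hab : n - m + m = n := by omega
    rw [hab] at hA
    have hext : ∑ k ∈ range (m + 1), (n - m).choose k * m.choose k * (n + k).choose k
        = ∑ k ∈ range (n + 1), (n - m).choose k * m.choose k * (n + k).choose k := by
      apply Finset.sum_subset (Finset.range_subset_range.2 (by omega))
      intro k _ hk
      rw [mem_range] at hk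
      rw [Nat.choose_eq_zero_of_lt (by omega : m < k)]
      ring
    rw [hext] at hA
    calc (n.choose m) ^ 3 * 2 ^ m
        = 2 ^ m * n.choose m * (n.choose m ^ 2) := by ring
      _ = 2 ^ m * n.choose m *
            ∑ k ∈ range (n + 1), (n - m).choose k * m.choose k * (n + k).choose k := by
          rw [← hA]
      _ = _ := by
          rw [Finset.mul_sum]
          apply Finset.sum_congr rfl
          intro k _
          ring
  rw [Finset.sum_congr rfl step1, Finset.sum_comm]
  have step2 : ∀ k ∈ range (n + 1),
      ∑ m ∈ range (n + 1),
          2 ^ m * (n.choose m * (m.choose k * (n - m).choose k)) * (n + k).choose k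
        = n.choose (2 * k) * (2 * k).choose k * (n + k).choose k * 2 ^ k * 3 ^ (n - 2 * k) := by
    intro k hk
    rw [mem_range, Nat.lt_succ_iff] at hk
    have hres : ∑ m ∈ range (n + 1),
        2 ^ m * (n.choose m * (m.choose k * (n - m).choose k)) * (n + k).choose k
        = ∑ m ∈ Finset.Ico k (n + 1),
            2 ^ m * (n.choose m * (m.choose k * (n - m).choose k)) * (n + k).choose k := by
      symm
      apply Finset.sum_subset
      · intro m hm
        rw [Finset.mem_Ico] at hm
        rw [mem_range]
        omega
      · intro m hm hm2
        rw [mem_range] at hm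
        rw [Finset.mem_Ico] at hm2
        rw [Nat.choose_eq_zero_of_lt (by omega : m < k)]
        ring
    rw [hres, Finset.sum_Ico_eq_sum_range]
    have hpt : ∀ j ∈ range (n + 1 - k),
        2 ^ (k + j) * (n.choose (k + j) * ((k + j).choose k * (n - (k + j)).choose k))
            * (n + k).choose k
          = n.choose (2 * k) * (2 * k).choose k * (n + k).choose k * 2 ^ k
              * ((n - 2 * k).choose j * 2 ^ j) := by
      intro j hj
      rw [mem_range] at hj
      rw [tri_aux n (k + j) k (by omega) (by omega)]
      have : k + j - k = j := by omega
      rw [this, pow_add]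
      ring
    rw [Finset.sum_congr rfl hpt, ← Finset.mul_sum]
    congr 1
    have h' : n + 1 - k = (n - k) + 1 := by omega
    rw [h']
    exact sum_two_pow (n - 2 * k) (n - k) (by omega)
  rw [Finset.sum_congr rfl step2]
  symm
  apply Finset.sum_subset (Finset.range_subset_range.2 (by omega))
  intro k _ hk
  rw [mem_range] at hk
  rw [Nat.choose_eq_zero_of_lt (by omega : n < 2 * k)]
  ring
end

section
/- For every positive integer n, ∑_{r=0}^{n} C(n,r)^3 · 2^r = ∑_{r=0}^{⌊n/2⌋} C(n+r,3r) · C(2r,r) · C(3r,r) · 2^r · 3^{n−2r}. -/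
open Finset
set_option maxRecDepth 100000
set_option maxHeartbeats 4000000

private def AA (n r : ℕ) : ℕ := (n+r).choose (3*r) * ((2*r).choose r * (3*r).choose r)
private def TT (n k r : ℕ) : ℕ := AA n r * (n - 2*r).choose (k - r)
private noncomputable def gg (n k r : ℕ) : ℚ :=
  (2*(k:ℚ)+1-(n:ℚ)) * ((n:ℚ)+r+1) * ((n:ℚ)-k-r) * (TT n k r : ℚ)

private lemma AAzero {n r : ℕ} (h : n < 2*r) : AA n r = 0 := by
  unfold AA; rw [Nat.choose_eq_zero_of_lt (by omega)]; simp

private lemma chooseQ (m s : ℕ) :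
    ((s:ℚ)+1) * (m.choose (s+1) : ℚ) = ((m:ℚ) - s) * (m.choose s : ℚ) := by
  rcases le_or_gt s m with h | h
  · have h0 := Nat.choose_succ_right_eq m s
    have h1 : ((m.choose (s+1) * (s+1) : ℕ) : ℚ) = ((m.choose s * (m - s) : ℕ) : ℚ) := by
      rw [h0]
    rw [Nat.cast_mul, Nat.cast_mul, Nat.cast_sub h] at h1
    push_cast at h1 ⊢
    linarith
  · rw [Nat.choose_eq_zero_of_lt h, Nat.choose_eq_zero_of_lt (by omega : m < s+1)]
    simp

private lemma AZ (n r : ℕ) :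
    ((r:ℚ)+1)^3 * (AA n (r+1) : ℚ) =
      ((n:ℚ)+r+1) * (((n:ℚ)-(2*r+1)) * (((n:ℚ)-2*r) * (AA n r : ℚ))) := by
  rcases le_or_gt (2*r+2) n with h | h
  · obtain ⟨m, rfl⟩ : ∃ m, n = 2*r+2+m := ⟨n-(2*r+2), by omega⟩
    unfold AA
    push_cast
    rw [show 2*r+2+m + (r+1) = 3*r+3+m from by ring,
        show 3*(r+1) = 3*r+3 from by ring,
        show 2*(r+1) = 2*r+2 from by ring,
        show 2*r+2+m+r = 3*r+2+m from by ring]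
    rw [Nat.cast_choose ℚ (show 3*r+3 ≤ 3*r+3+m by omega),
        Nat.cast_choose ℚ (show r+1 ≤ 2*r+2 by omega),
        Nat.cast_choose ℚ (show r+1 ≤ 3*r+3 by omega),
        Nat.cast_choose ℚ (show 3*r ≤ 3*r+2+m by omega),
        Nat.cast_choose ℚ (show r ≤ 2*r by omega),
        Nat.cast_choose ℚ (show r ≤ 3*r by omega)]
    rw [show 3*r+3+m - (3*r+3) = m from by omega,
        show 2*r+2 - (r+1) = r+1 from by omega,
        show 3*r+3 - (r+1) = 2*r+2 from by omega,
        show 3*r+2+m - 3*r = m+2 from by omega,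
        show 2*r - r = r from by omega,
        show 3*r - r = 2*r from by omega]
    rw [show 3*r+3+m = (3*r+2+m)+1 from by ring,
        show (3*r+3 : ℕ) = (3*r+2)+1 from by ring,
        show ((3*r+2 : ℕ)) = (3*r+1)+1 from by ring,
        show ((3*r+1 : ℕ)) = (3*r)+1 from by ring]
    rw [show (2*r+2 : ℕ) = (2*r+1)+1 from by ring,
        show ((2*r+1 : ℕ)) = (2*r)+1 from by ring,
        show (m+2 : ℕ) = (m+1)+1 from by ring]
    simp only [Nat.factorial_succ]
    have f1 : (Nat.factorial (3*r+2+m) : ℚ) ≠ 0 := by positivity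
    have f2 : (Nat.factorial (3*r) : ℚ) ≠ 0 := by positivity
    have f3 : (Nat.factorial (2*r) : ℚ) ≠ 0 := by positivity
    have f4 : (Nat.factorial r : ℚ) ≠ 0 := by positivity
    have f5 : (Nat.factorial m : ℚ) ≠ 0 := by positivity
    push_cast
    field_simp
    ring
  · rcases (by omega : n = 2*r+1 ∨ n = 2*r ∨ n < 2*r) with h1 | h1 | h1
    · subst h1; rw [AAzero (by omega)]; push_cast; ring
    · subst h1; rw [AAzero (by omega)]; push_cast; ring
    · rw [AAzero (by omega : n < 2*(r+1)), AAzero h1]; push_cast; ring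

private lemma star0 (n k : ℕ) :
    ((k:ℚ)+1)^3 * (TT n (k+1) 0 : ℚ) = ((n:ℚ)-k)^3 * (TT n k 0 : ℚ) + gg n k 0 := by
  have h := chooseQ n k
  simp only [TT, AA, gg, Nat.mul_zero, Nat.sub_zero, Nat.choose_zero_right,
    Nat.choose_self, one_mul, mul_one, Nat.add_zero]
  push_cast
  linear_combination (((k:ℚ)+1)^2) * h

private lemma starS (n k r : ℕ) (h : r+1 ≤ k) :
    ((k:ℚ)+1)^3 * (TT n (k+1) (r+1) : ℚ) =
      ((n:ℚ)-k)^3 * (TT n k (r+1) : ℚ) + gg n k (r+1) - gg n k r := by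
  rcases le_or_gt (2*(r+1)) n with hn | hn
  · obtain ⟨m, rfl⟩ : ∃ m, n = 2*r+2+m := ⟨n-(2*r+2), by omega⟩
    rcases eq_or_lt_of_le h with hk | hk
    · -- k = r+1
      subst hk
      simp only [TT, gg,
        show 2*r+2+m - 2*(r+1) = m from by omega,
        show r+1+1 - (r+1) = 1 from by omega,
        show r+1 - (r+1) = 0 from by omega,
        show 2*r+2+m - 2*r = m+2 from by omega,
        show r+1 - r = 1 from by omega,
        Nat.choose_zero_right, Nat.choose_one_right]
      have h4 := AZ (2*r+2+m) r
      push_cast at h4 ⊢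
      apply mul_left_cancel₀ (show ((r:ℚ)+1)^3 ≠ 0 from by positivity)
      ring_nf
      ring_nf at h4
      linear_combination (((m:ℚ)-1)*((r:ℚ)+1)^3) * h4
    · -- r+1 < k
      obtain ⟨j, rfl⟩ : ∃ j, k = r+2+j := ⟨k-(r+2), by omega⟩
      simp only [TT, gg,
        show 2*r+2+m - 2*(r+1) = m from by omega,
        show r+2+j+1 - (r+1) = j+2 from by omega,
        show r+2+j - (r+1) = j+1 from by omega,
        show 2*r+2+m - 2*r = m+2 from by omega,
        show r+2+j - r = j+2 from by omega]
      have h1 := chooseQ m (j+1)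
      have h2 := chooseQ m j
      have h3 : ((m+2).choose (j+2) : ℚ) =
          (m.choose j : ℚ) + 2*(m.choose (j+1) : ℚ) + (m.choose (j+2) : ℚ) := by
        have p1 : (m+2).choose (j+2) = (m+1).choose (j+1) + (m+1).choose (j+2) := by
          rw [show m+2 = (m+1)+1 from rfl, show j+2 = (j+1)+1 from rfl]
          exact Nat.choose_succ_succ _ _
        have p2 : (m+1).choose (j+1) = m.choose j + m.choose (j+1) :=
          Nat.choose_succ_succ _ _
        have p3 : (m+1).choose (j+2) = m.choose (j+1) + m.choose (j+2) := by
          rw [show j+2 = (j+1)+1 from rfl]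
          exact Nat.choose_succ_succ _ _
        rw [p1, p2, p3]; push_cast; ring
      have h4 := AZ (2*r+2+m) r
      push_cast at h1
      push_cast at h2
      push_cast at h4
      push_cast
      apply mul_left_cancel₀
        (show ((r:ℚ)+1)^3*((j:ℚ)+1)*((j:ℚ)+2) ≠ 0 from by positivity)
      linear_combination
        (((j:ℚ)+1) * (AA (2*r+2+m) r : ℚ) *
            (((m:ℚ)+3*r+3)*((m:ℚ)+1)*((m:ℚ)+2)*((r:ℚ)+(j:ℚ)+3)^3 +
              (2*(j:ℚ)+3-(m:ℚ))*((m:ℚ)+3*(r:ℚ)+3)*((m:ℚ)-(j:ℚ))*((r:ℚ)+1)^3)) * h1 +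
        ((AA (2*r+2+m) r : ℚ) *
            (((j:ℚ)+2) * (2*((2*(j:ℚ)+3-(m:ℚ))*((m:ℚ)+3*(r:ℚ)+3)*((m:ℚ)-(j:ℚ)))*((r:ℚ)+1)^3 -
                ((m:ℚ)+3*r+3)*((m:ℚ)+1)*((m:ℚ)+2)*
                  (((m:ℚ)+(r:ℚ)-(j:ℚ))^3 + (2*(j:ℚ)+3-(m:ℚ))*((m:ℚ)+3*(r:ℚ)+4)*((m:ℚ)-(j:ℚ)-1))) +
              ((m:ℚ)-(j:ℚ)-1) *
                (((m:ℚ)+3*r+3)*((m:ℚ)+1)*((m:ℚ)+2)*((r:ℚ)+(j:ℚ)+3)^3 +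
                  (2*(j:ℚ)+3-(m:ℚ))*((m:ℚ)+3*(r:ℚ)+3)*((m:ℚ)-(j:ℚ))*((r:ℚ)+1)^3))) * h2 +
        (((j:ℚ)+1)*((j:ℚ)+2)*((2*(j:ℚ)+3-(m:ℚ))*((m:ℚ)+3*(r:ℚ)+3)*((m:ℚ)-(j:ℚ)))*((r:ℚ)+1)^3*(AA (2*r+2+m) r : ℚ)) * h3 +
        (((j:ℚ)+1)*((j:ℚ)+2)*
            (((r:ℚ)+(j:ℚ)+3)^3*(m.choose (j+2) : ℚ) -
              (((m:ℚ)+(r:ℚ)-(j:ℚ))^3 + (2*(j:ℚ)+3-(m:ℚ))*((m:ℚ)+3*(r:ℚ)+4)*((m:ℚ)-(j:ℚ)-1))*(m.choose (j+1) : ℚ))) * h4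
  · -- 2(r+1) > n : everything vanishes
    have hb : AA n (r+1) = 0 := AAzero (by omega)
    have t1 : TT n (k+1) (r+1) = 0 := by simp [TT, hb]
    have t2 : TT n k (r+1) = 0 := by simp [TT, hb]
    have t3 : gg n k (r+1) = 0 := by simp [gg, t2]
    rw [t1, t2, t3]
    have t4 : gg n k r = 0 := by
      rcases (by omega : n < 2*r ∨ n = 2*r ∨ n = 2*r+1) with h1 | h1 | h1
      · simp [gg, TT, AAzero h1]
      · subst h1
        simp [gg, TT, Nat.sub_self, Nat.choose_eq_zero_of_lt (show 0 < k - r from by omega)]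
      · subst h1
        rcases (by omega : k = r+1 ∨ r+2 ≤ k) with h2 | h2
        · subst h2
          simp only [gg]
          push_cast
          ring
        · simp [gg, TT, show 2*r+1 - 2*r = 1 from by omega,
            Nat.choose_eq_zero_of_lt (show 1 < k - r from by omega)]
    rw [t4]
    push_cast
    ring

private lemma kernel (k n : ℕ) :
    ∑ r ∈ range (k+1), TT n k r = n.choose k ^ 3 := by
  induction k with
  | zero => simp [TT, AA]
  | succ k ih =>
    set F : ℕ → ℚ := fun r => if r = 0 then 0 else gg n k (r-1) with hF
    have e0 : F 0 = 0 := by simp [hF]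
    have e1 : ∀ i : ℕ, F (i+1) = gg n k i := by intro i; simp [hF]
    have hstep : ∀ r ∈ range (k+1),
        ((k:ℚ)+1)^3 * (TT n (k+1) r : ℚ)
          = ((n:ℚ)-k)^3 * (TT n k r : ℚ) + (F (r+1) - F r) := by
      rintro (_ | i) hr
      · rw [show (0:ℕ)+1 = 1 from rfl, e1, e0]
        have := star0 n k
        linarith [this]
      · have hik : i+1 ≤ k := by
          have := mem_range.mp hr; omega
        rw [e1, e1]
        have := starS n k i hik
        linarith [this]
    have hmain : ((k:ℚ)+1)^3 * (∑ r ∈ range (k+2), (TT n (k+1) r : ℚ))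
        = ((k:ℚ)+1)^3 * ((n.choose (k+1) : ℚ))^3 := by
      rw [sum_range_succ, mul_add, mul_sum]
      rw [Finset.sum_congr rfl hstep]
      rw [sum_add_distrib, Finset.sum_range_sub (f := F)]
      have hih : (∑ r ∈ range (k+1), (TT n k r : ℚ)) = ((n.choose k : ℚ))^3 := by
        have := congrArg (Nat.cast (R := ℚ)) (ih)
        push_cast at this
        simpa using this
      rw [← mul_sum, hih]
      have hbound : F (k+1) - F 0 + ((k:ℚ)+1)^3 * (TT n (k+1) (k+1) : ℚ) = 0 := by
        have hT1 : TT n (k+1) (k+1) = AA n (k+1) := by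
          simp [TT]
        have hT2 : (TT n k k : ℚ) = (AA n k : ℚ) := by
          simp [TT]
        have hAZ := AZ n k
        rw [e1, e0, hT1]
        simp only [gg, hT2]
        skip
        push_cast at hAZ
        linear_combination hAZ
      have hch : (((n:ℚ)-k) * (n.choose k : ℚ))^3 = (((k:ℚ)+1) * (n.choose (k+1) : ℚ))^3 := by
        rw [← chooseQ n k]
      calc ((n:ℚ)-k)^3 * ((n.choose k : ℚ))^3 + (F (k+1) - F 0)
            + ((k:ℚ)+1)^3 * (TT n (k+1) (k+1) : ℚ)
          = (((n:ℚ)-k) * (n.choose k : ℚ))^3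
            + (F (k+1) - F 0 + ((k:ℚ)+1)^3 * (TT n (k+1) (k+1) : ℚ)) := by ring
        _ = ((k:ℚ)+1)^3 * ((n.choose (k+1) : ℚ))^3 := by
            rw [hbound, hch]; ring
    have hc : (∑ r ∈ range (k+2), (TT n (k+1) r : ℚ)) = ((n.choose (k+1) : ℚ))^3 :=
      mul_left_cancel₀ (show ((k:ℚ)+1)^3 ≠ 0 from by positivity) hmain
    have : ((∑ r ∈ range (k+2), TT n (k+1) r : ℕ) : ℚ) = (((n.choose (k+1))^3 : ℕ) : ℚ) := by
      push_cast
      simpa using hc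
    exact_mod_cast this

private lemma pow3 (M : ℕ) : ∑ i ∈ range (M+1), M.choose i * 2^i = 3^M := by
  have h := add_pow 2 1 M (R := ℕ)
  simp only [one_pow, mul_one] at h
  rw [show (2+1:ℕ) = 3 from rfl] at h
  rw [h]
  exact Finset.sum_congr rfl fun i _ => by push_cast; ring

theorem stmt_6 (n : ℕ) (hn : 0 < n) :
    ∑ r ∈ Finset.range (n + 1), (n.choose r) ^ 3 * 2 ^ r =
      ∑ r ∈ Finset.range (n / 2 + 1),
        (n + r).choose (3 * r) * (2 * r).choose r * (3 * r).choose r * 2 ^ r *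
          3 ^ (n - 2 * r) := by
  have step1 : ∑ r ∈ range (n + 1), (n.choose r) ^ 3 * 2 ^ r
      = ∑ k ∈ range (n + 1), ∑ r ∈ range (k+1), TT n k r * 2 ^ k := by
    refine Finset.sum_congr rfl fun k _ => ?_
    rw [← Finset.sum_mul, kernel]
  have step2 : ∑ k ∈ range (n + 1), ∑ r ∈ range (k+1), TT n k r * 2 ^ k
      = ∑ r ∈ range (n + 1), ∑ k ∈ Icc r n, TT n k r * 2 ^ k := by
    refine Finset.sum_comm' ?_
    intro k r
    simp only [mem_range, mem_Icc]
    omega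
  have step3 : ∀ r ∈ range (n+1),
      ∑ k ∈ Icc r n, TT n k r * 2 ^ k = AA n r * 2^r * 3^(n - 2*r) := by
    intro r hr
    have hrn : r ≤ n := by simpa using Nat.lt_succ_iff.mp (mem_range.mp hr)
    rw [← Finset.Ico_add_one_right_eq_Icc, Finset.sum_Ico_eq_sum_range]
    have e1 : ∀ i, TT n (r+i) r = AA n r * (n - 2*r).choose i := by
      intro i
      simp [TT, Nat.add_sub_cancel_left]
    calc ∑ i ∈ range (n+1-r), TT n (r+i) r * 2^(r+i)
        = AA n r * 2^r * ∑ i ∈ range (n+1-r), (n - 2*r).choose i * 2^i := by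
          rw [mul_sum]
          refine Finset.sum_congr rfl fun i _ => ?_
          rw [e1, pow_add]
          ring
      _ = AA n r * 2^r * ∑ i ∈ range (n - 2*r + 1), (n - 2*r).choose i * 2^i := by
          congr 1
          refine (Finset.sum_subset ?_ ?_).symm
          · apply Finset.range_subset_range.mpr; omega
          · intro i _ hi
            rw [Nat.choose_eq_zero_of_lt (by simp at hi ⊢; omega)]
            ring
      _ = AA n r * 2^r * 3^(n - 2*r) := by rw [pow3]
  have step4 : ∑ r ∈ range (n + 1), AA n r * 2^r * 3^(n - 2*r)
      = ∑ r ∈ range (n/2 + 1), AA n r * 2^r * 3^(n - 2*r) := by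
    refine (Finset.sum_subset ?_ ?_).symm
    · apply Finset.range_subset_range.mpr; omega
    · intro r _ hr
      rw [AAzero (by simp at hr ⊢; omega)]
      ring
  rw [step1, step2, Finset.sum_congr rfl step3, step4]
  refine Finset.sum_congr rfl fun r _ => ?_
  simp only [AA]
  ring
end

section
/- For every positive integer m, the 3-adic valuation of C(2m,m) · C(3m,m) · 2^m equals s₃(m). -/
theorem stmt_9 (m : ℕ) (hm : 0 < m) :
    padicValNat 3 ((2 * m).choose m * (3 * m).choose m * 2 ^ m) =
      (Nat.digits 3 m).sum := by
  haveI : Fact (Nat.Prime 3) := ⟨by norm_num⟩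
  have h3m : (Nat.digits 3 (3 * m)).sum = (Nat.digits 3 m).sum := by
    rw [Nat.digits_def' (by norm_num : 1 < 3) (by positivity)]
    simp [Nat.mul_div_cancel_left m (by norm_num : 0 < 3)]
  have Lm := sub_one_mul_padicValNat_factorial (p := 3) m
  have L2m := sub_one_mul_padicValNat_factorial (p := 3) (2 * m)
  have L3m := sub_one_mul_padicValNat_factorial (p := 3) (3 * m)
  have dm := Nat.digit_sum_le 3 m
  have d2m := Nat.digit_sum_le 3 (2 * m)
  have d3m := Nat.digit_sum_le 3 (3 * m)
  have hc1 : (2 * m).choose m * m.factorial * m.factorial = (2 * m).factorial := by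
    have := Nat.choose_mul_factorial_mul_factorial (show m ≤ 2 * m by omega)
    simpa [show 2 * m - m = m by omega] using this
  have hc2 : (3 * m).choose m * m.factorial * (2 * m).factorial = (3 * m).factorial := by
    have := Nat.choose_mul_factorial_mul_factorial (show m ≤ 3 * m by omega)
    simpa [show 3 * m - m = 2 * m by omega] using this
  have hch1 : ((2 * m).choose m) ≠ 0 := (Nat.choose_pos (by omega)).ne'
  have hch2 : ((3 * m).choose m) ≠ 0 := (Nat.choose_pos (by omega)).ne'
  have hf : m.factorial ≠ 0 := Nat.factorial_ne_zero m
  have hf2 : (2 * m).factorial ≠ 0 := Nat.factorial_ne_zero _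
  have v1 : padicValNat 3 ((2 * m).choose m) + padicValNat 3 m.factorial +
      padicValNat 3 m.factorial = padicValNat 3 (2 * m).factorial := by
    rw [← padicValNat.mul hch1 hf, ← padicValNat.mul (mul_ne_zero hch1 hf) hf, hc1]
  have v2 : padicValNat 3 ((3 * m).choose m) + padicValNat 3 m.factorial +
      padicValNat 3 (2 * m).factorial = padicValNat 3 (3 * m).factorial := by
    rw [← padicValNat.mul hch2 hf, ← padicValNat.mul (mul_ne_zero hch2 hf) hf2, hc2]
  have hpow : padicValNat 3 (2 ^ m) = 0 := by
    apply padicValNat.eq_zero_of_not_dvd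
    intro h
    have := Nat.Prime.dvd_of_dvd_pow (p := 3) (by norm_num) h
    omega
  rw [padicValNat.mul (mul_ne_zero hch1 hch2) (by positivity),
    padicValNat.mul hch1 hch2, hpow, add_zero]
  omega
end

section
/- For every positive integer m and every integer r with 0 ≤ r ≤ m−1, the 3-adic valuation of C(2m+r,3r) · C(2r,r) · C(3r,r) · 2^r · 3^{2m−2r} is at least 1 + s₃(m). -/
open Nat

private instance f3 : Fact (Nat.Prime 3) := ⟨by norm_num⟩

private lemma leg (n : ℕ) :
    2 * padicValNat 3 (n !) + (Nat.digits 3 n).sum = n := by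
  have h := sub_one_mul_padicValNat_factorial (p := 3) n
  have h2 := Nat.digit_sum_le 3 n
  omega

private lemma subadd (a b : ℕ) :
    (Nat.digits 3 (a + b)).sum ≤ (Nat.digits 3 a).sum + (Nat.digits 3 b).sum := by
  have hC : padicValNat 3 (a ! ) + padicValNat 3 (b !) ≤ padicValNat 3 ((a + b)!) := by
    have hd : a ! * b ! ∣ (a + b)! := Nat.factorial_mul_factorial_dvd_factorial_add a b
    calc padicValNat 3 (a !) + padicValNat 3 (b !)
        = padicValNat 3 (a ! * b !) := by
          rw [padicValNat.mul (Nat.factorial_ne_zero a) (Nat.factorial_ne_zero b)]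
      _ ≤ padicValNat 3 ((a + b)!) := by
          obtain ⟨c, hc⟩ := hd
          have hc0 : c ≠ 0 := by
            intro h; rw [h, mul_zero] at hc; exact Nat.factorial_ne_zero _ hc
          rw [hc, padicValNat.mul (by positivity) hc0]
          exact Nat.le_add_right _ _
  have h1 := leg a
  have h2 := leg b
  have h3 := leg (a + b)
  omega

private lemma s3mul (r : ℕ) : (Nat.digits 3 (3 * r)).sum = (Nat.digits 3 r).sum := by
  rcases Nat.eq_zero_or_pos r with h | h
  · simp [h]
  · rw [Nat.digits_def' (by norm_num) (by positivity)]
    simp [Nat.mul_div_cancel_left r (by norm_num : 0 < 3), Nat.mul_mod_right]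

theorem stmt_11 (m : ℕ) (hm : 0 < m) (r : ℕ) (hr : r ≤ m - 1) :
    1 + (Nat.digits 3 m).sum ≤
      padicValNat 3 ((2 * m + r).choose (3 * r) * (2 * r).choose r * (3 * r).choose r *
        2 ^ r * 3 ^ (2 * m - 2 * r)) := by
  have hrm : r < m := by omega
  have h1 : (2 * m + r).choose (3 * r) ≠ 0 := (Nat.choose_pos (by omega)).ne'
  have h2 : (2 * r).choose r ≠ 0 := (Nat.choose_pos (by omega)).ne'
  have h3 : (3 * r).choose r ≠ 0 := (Nat.choose_pos (by omega)).ne'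
  have h4 : (2:ℕ) ^ r ≠ 0 := by positivity
  have h5 : (3:ℕ) ^ (2 * m - 2 * r) ≠ 0 := by positivity
  rw [padicValNat.mul (by positivity) h5, padicValNat.mul (by positivity) h4,
    padicValNat.mul (by positivity) h3, padicValNat.mul h1 h2, padicValNat.prime_pow]
  -- valuation of central-type binomials: v(C(2r,r)) + v(C(3r,r)) = s₃(r)
  have e2 : (2*r).choose r * (r ! * r !) = (2*r)! := by
    have := Nat.choose_mul_factorial_mul_factorial (show r ≤ 2*r by omega)
    rw [show 2*r - r = r by omega] at this
    linarith [this]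
  have e3 : (3*r).choose r * (r ! * (2*r)!) = (3*r)! := by
    have := Nat.choose_mul_factorial_mul_factorial (show r ≤ 3*r by omega)
    rw [show 3*r - r = 2*r by omega] at this
    linarith [this]
  have v2 : padicValNat 3 ((2*r).choose r) + 2 * padicValNat 3 (r !)
      = padicValNat 3 ((2*r)!) := by
    have := congrArg (padicValNat 3) e2
    rw [padicValNat.mul h2 (by positivity),
      padicValNat.mul (Nat.factorial_ne_zero r) (Nat.factorial_ne_zero r)] at this
    omega
  have v3 : padicValNat 3 ((3*r).choose r) + padicValNat 3 (r !) + padicValNat 3 ((2*r)!)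
      = padicValNat 3 ((3*r)!) := by
    have := congrArg (padicValNat 3) e3
    rw [padicValNat.mul h3 (by positivity),
      padicValNat.mul (Nat.factorial_ne_zero r) (Nat.factorial_ne_zero _)] at this
    omega
  have lr := leg r
  have l3r := leg (3*r)
  have hs3 := s3mul r
  have hcentral : padicValNat 3 ((2*r).choose r) + padicValNat 3 ((3*r).choose r)
      = (Nat.digits 3 r).sum := by omega
  -- s₃(m) ≤ s₃(m-r) + s₃(r) ≤ (m-r) + s₃(r)
  have hsub := subadd (m - r) r
  rw [show m - r + r = m by omega] at hsub
  have hmr := Nat.digit_sum_le 3 (m - r)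
  omega
end
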